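/- arXiv:2201.08612 — 8 statements merged into one kernel-verified Lean document; each statement's English description precedes it below -/
import Mathlib

section
/- For a binary string s of length n and any k with 1 ≤ k ≤ ⌈n/2⌉, the cumulative weight satisfies w_k(s) = Σ_{i=1}^{k} i·σ_i + k·Σ_{i=k+1}^{⌈n/2⌉} σ_i. -/
/-- cumulative weight `w_k(s)` : total number of 1s over all length-`k` substrings of
the binary string `s = s_1 ... s_n` (1-indexed). -/
def cumw (n : ℕ) (s : ℕ → ℕ) (k : ℕ) : ℕ :=
  ∑ i ∈ Finset.Icc 1 (n - k + 1), ∑ j ∈ Finset.Icc i (i + k - 1), s j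

/-- `σ_i = wt(s_i s_{n+1-i})` for `i ≤ ⌊n/2⌋`, and `σ_{⌈n/2⌉} = wt(s_{⌈n/2⌉})` when `n` odd. -/
def sigma' (n : ℕ) (s : ℕ → ℕ) (i : ℕ) : ℕ :=
  if n + 1 - i = i then s i else s i + s (n + 1 - i)

/-!
Exchanging the two sums, `w_k(s) = ∑ⱼ c(j) s_j` where `c(j) = min(j, n + 1 - j, k, n + 1 - k)`
counts the windows of length `k` through position `j`. The weight `c` is invariant under the reflection
`j ↦ n + 1 - j`, so folding the positions onto the first half pairs `s_j` with `s_{n+1-j}` into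
`σ_j` with weight `c(j)`, which on the first half is `min(j, k)` because `k ≤ ⌈n/2⌉`.
-/

open Finset

theorem cumw_eq_sum_min_mul (n k : ℕ) (s : ℕ → ℕ) (hkn : k ≤ n) :
    cumw n s k = ∑ j ∈ Ioc 0 n, min (min j (n + 1 - j)) (min k (n + 1 - k)) * s j := by
  unfold cumw
  -- position `j` lies in the windows starting at `max 1 (j + 1 - k), …, min j (n + 1 - k)`
  rw [sum_comm' (t' := Ioc 0 n)
      (s' := fun j => Icc (max 1 (j + 1 - k)) (min j (n + 1 - k)))
      (fun i j => by simp only [mem_Icc, mem_Ioc]; omega)]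
  refine sum_congr rfl fun j hj => ?_
  rw [sum_const, smul_eq_mul, Nat.card_Icc]
  rw [mem_Ioc] at hj
  congr 1
  omega

theorem sum_Ioc_reflect {M : Type*} [AddCommMonoid M] (g : ℕ → M) {m n : ℕ} (hmn : m ≤ n) :
    ∑ j ∈ Ioc m n, g j = ∑ i ∈ Ioc 0 (n - m), g (n + 1 - i) := by
  refine sum_nbij' (fun j => n + 1 - j) (fun i => n + 1 - i) ?_ ?_ ?_ ?_ ?_ <;>
    intro a ha <;> simp only [mem_Ioc] at ha ⊢
  · omega
  · omega
  · omega
  · omega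
  · rw [show n + 1 - (n + 1 - a) = a by omega]

theorem sum_Ioc_eq_sum_fold {M : Type*} [AddCommMonoid M] (g : ℕ → M) (n : ℕ) :
    ∑ j ∈ Ioc 0 n, g j =
      ∑ i ∈ Ioc 0 ((n + 1) / 2), if n + 1 - i = i then g i else g i + g (n + 1 - i) := by
  have hsplit (i : ℕ) : (if n + 1 - i = i then g i else g i + g (n + 1 - i)) =
      g i + if n + 1 - i ≠ i then g (n + 1 - i) else 0 := by
    split_ifs <;> simp_all
  -- only the middle index of an odd `n` is its own mirror image
  have hpaired : (Ioc 0 ((n + 1) / 2)).filter (fun i => n + 1 - i ≠ i) =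
      Ioc 0 (n - (n + 1) / 2) := by
    ext i
    simp only [mem_filter, mem_Ioc]
    omega
  simp only [hsplit, sum_add_distrib, ← sum_filter, hpaired]
  rw [← sum_Ioc_reflect g (by omega), sum_Ioc_consecutive g (Nat.zero_le _) (by omega)]

theorem sum_Ioc_min_nsmul {M : Type*} [AddCommMonoid M] (f : ℕ → M) {k m : ℕ} (hkm : k ≤ m) :
    ∑ i ∈ Ioc 0 m, min i k • f i = ∑ i ∈ Icc 1 k, i • f i + k • ∑ i ∈ Icc (k + 1) m, f i := by
  rw [← sum_Ioc_consecutive _ (Nat.zero_le k) hkm, smul_sum]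
  congr 1
  · refine sum_congr (Icc_add_one_left_eq_Ioc 0 k).symm fun i hi => ?_
    rw [mem_Icc] at hi
    rw [min_eq_left hi.2]
  · refine sum_congr (Icc_add_one_left_eq_Ioc k m).symm fun i hi => ?_
    rw [mem_Icc] at hi
    rw [min_eq_right (by omega)]

theorem cumw_eq_sum_min_mul_sigma' (n k : ℕ) (s : ℕ → ℕ) (hk : k ≤ (n + 1) / 2) :
    cumw n s k = ∑ i ∈ Ioc 0 ((n + 1) / 2), min i k * sigma' n s i := by
  rw [cumw_eq_sum_min_mul n k s (by omega), sum_Ioc_eq_sum_fold]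
  refine sum_congr rfl fun i hi => ?_
  rw [mem_Ioc] at hi
  rw [show min (min i (n + 1 - i)) (min k (n + 1 - k)) = min i k by omega,
    show min (min (n + 1 - i) (n + 1 - (n + 1 - i))) (min k (n + 1 - k)) = min i k by omega,
    sigma']
  split_ifs <;> ring

theorem stmt2_general (n k : ℕ) (s : ℕ → ℕ)
    (hk2 : k ≤ (n + 1) / 2) :
    cumw n s k =
      ∑ i ∈ Finset.Icc 1 k, i * sigma' n s i +
        k * ∑ i ∈ Finset.Icc (k + 1) ((n + 1) / 2), sigma' n s i := by
  simpa only [smul_eq_mul] using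
    (cumw_eq_sum_min_mul_sigma' n k s hk2).trans (sum_Ioc_min_nsmul (sigma' n s) hk2)

theorem stmt2 (n k : ℕ) (s : ℕ → ℕ) (hbits : ∀ i, s i ≤ 1)
    (hk1 : 1 ≤ k) (hk2 : k ≤ (n + 1) / 2) :
    cumw n s k =
      ∑ i ∈ Finset.Icc 1 k, i * sigma' n s i +
        k * ∑ i ∈ Finset.Icc (k + 1) ((n + 1) / 2), sigma' n s i :=
  stmt2_general n k s hk2
end

section
/- For a binary string s of length n and any k with 2 ≤ k ≤ ⌈n/2⌉, the cumulative weights satisfy the recursion w_k(s) = k·w_1(s) − Σ_{i=1}^{k-1} i·σ_{k-i}. -/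
/-!
Both sides are weighted sums `∑ j, c j * s j` over the positions `1 ≤ j ≤ n`. Position `j` lies in
`min (min j (n + 1 - j)) (min k (n + 1 - k))` windows of length `k`; when `2 * k ≤ n + 1` this falls
short of `k` by `(k - j) + (k - (n + 1 - j))` (truncated subtraction), which is exactly the
coefficient of `s j` in `∑ i, i * σ (k - i)` once that sum is reindexed by `j = k - i`.
-/

open Finset

theorem Finset.sum_Icc_one_reflect {M : Type*} [AddCommMonoid M] (f : ℕ → M) (n : ℕ) :
    ∑ j ∈ Icc 1 n, f (n + 1 - j) = ∑ j ∈ Icc 1 n, f j := by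
  have h := sum_Ico_reflect f 1 (m := n + 1) (n := n + 1) (by omega)
  simp only [Nat.add_sub_cancel_left, Nat.add_sub_cancel] at h
  rwa [Ico_add_one_right_eq_Icc] at h

theorem sum_Icc_tsub_mul_of_le {k n : ℕ} (f : ℕ → ℕ) (hk : k ≤ n + 1) :
    ∑ j ∈ Icc 1 (k - 1), (k - j) * f j = ∑ j ∈ Icc 1 n, (k - j) * f j := by
  refine sum_subset (Icc_subset_Icc_right (by omega)) fun j hjn hj => ?_
  rw [mem_Icc] at hjn hj
  rw [Nat.sub_eq_zero_of_le (by omega), zero_mul]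

theorem card_windows_containing {n k j : ℕ} (hk : k ≤ n) (hj : j ∈ Icc 1 n) :
    #{i ∈ Icc 1 (n - k + 1) | j ∈ Icc i (i + k - 1)} =
      min (min j (n + 1 - j)) (min k (n + 1 - k)) := by
  have hwin : {i ∈ Icc 1 (n - k + 1) | j ∈ Icc i (i + k - 1)} =
      Icc (max 1 (j + 1 - k)) (min j (n - k + 1)) := by
    ext i
    simp only [mem_filter, mem_Icc] at hj ⊢
    omega
  rw [hwin, Nat.card_Icc]
  rw [mem_Icc] at hj
  omega

theorem cumw_eq_sum_mul {n k : ℕ} (s : ℕ → ℕ) (hk : k ≤ n) :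
    cumw n s k = ∑ j ∈ Icc 1 n, min (min j (n + 1 - j)) (min k (n + 1 - k)) * s j := by
  have hwindow : ∀ i ∈ Icc 1 (n - k + 1),
      ∑ j ∈ Icc i (i + k - 1), s j = ∑ j ∈ Icc 1 n, if j ∈ Icc i (i + k - 1) then s j else 0 := by
    intro i hi
    rw [sum_ite_mem, inter_eq_right.mpr]
    rw [mem_Icc] at hi
    exact Icc_subset_Icc (by omega) (by omega)
  rw [cumw, sum_congr rfl hwindow, sum_comm]
  refine sum_congr rfl fun j hj => ?_
  rw [← sum_filter, sum_const, card_windows_containing hk hj, smul_eq_mul]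

theorem cumw_one {n : ℕ} (s : ℕ → ℕ) (hn : 1 ≤ n) : cumw n s 1 = ∑ j ∈ Icc 1 n, s j := by
  rw [cumw_eq_sum_mul s hn]
  refine sum_congr rfl fun j hj => ?_
  rw [mem_Icc] at hj
  rw [show min (min j (n + 1 - j)) (min 1 (n + 1 - 1)) = 1 by omega, one_mul]

theorem sigma'_of_two_mul_lt {n i : ℕ} (s : ℕ → ℕ) (hi : 2 * i < n + 1) :
    sigma' n s i = s i + s (n + 1 - i) :=
  if_neg (by omega)

theorem sum_mul_sigma' {n k : ℕ} (s : ℕ → ℕ) (hk : 2 * k ≤ n + 1) :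
    ∑ i ∈ Icc 1 (k - 1), i * sigma' n s (k - i) =
      ∑ j ∈ Icc 1 n, ((k - j) + (k - (n + 1 - j))) * s j := by
  calc ∑ i ∈ Icc 1 (k - 1), i * sigma' n s (k - i)
      = ∑ j ∈ Icc 1 (k - 1), (k - j) * sigma' n s j := by
        rw [← sum_Icc_one_reflect]
        refine sum_congr rfl fun j hj => ?_
        rw [mem_Icc] at hj
        rw [show k - 1 + 1 - j = k - j by omega, show k - (k - j) = j by omega]
    _ = ∑ j ∈ Icc 1 (k - 1), (k - j) * s j + ∑ j ∈ Icc 1 (k - 1), (k - j) * s (n + 1 - j) := by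
        rw [← sum_add_distrib]
        refine sum_congr rfl fun j hj => ?_
        rw [mem_Icc] at hj
        rw [sigma'_of_two_mul_lt s (by omega), mul_add]
    _ = ∑ j ∈ Icc 1 n, (k - j) * s j + ∑ j ∈ Icc 1 n, (k - (n + 1 - j)) * s j := by
        have hkn : k ≤ n + 1 := by omega
        rw [sum_Icc_tsub_mul_of_le s hkn, sum_Icc_tsub_mul_of_le (fun j => s (n + 1 - j)) hkn,
          ← sum_Icc_one_reflect fun j => (k - j) * s (n + 1 - j)]
        refine congrArg _ (sum_congr rfl fun j hj => ?_)
        rw [mem_Icc] at hj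
        rw [show n + 1 - (n + 1 - j) = j by omega]
    _ = ∑ j ∈ Icc 1 n, ((k - j) + (k - (n + 1 - j))) * s j := by
        simp only [add_mul, sum_add_distrib]

theorem stmt3_general (n k : ℕ) (s : ℕ → ℕ) (hk2 : k ≤ (n + 1) / 2) :
    cumw n s k + ∑ i ∈ Finset.Icc 1 (k - 1), i * sigma' n s (k - i) = k * cumw n s 1 := by
  rcases Nat.eq_zero_or_pos k with rfl | hk
  · simp [cumw_eq_sum_mul s (Nat.zero_le n)]
  rw [cumw_eq_sum_mul s (by omega), sum_mul_sigma' s (by omega), cumw_one s (by omega), mul_sum,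
    ← sum_add_distrib]
  refine sum_congr rfl fun j hj => ?_
  rw [mem_Icc] at hj
  rw [← add_mul]
  congr 1
  omega

/-- `w_k(s) = k·w_1(s) − Σ_{i=1}^{k-1} i·σ_{k-i}`, stated additively over ℕ. -/
theorem stmt3 (n k : ℕ) (s : ℕ → ℕ) (hbits : ∀ i, s i ≤ 1)
    (hk1 : 2 ≤ k) (hk2 : k ≤ (n + 1) / 2) :
    cumw n s k + ∑ i ∈ Finset.Icc 1 (k - 1), i * sigma' n s (k - i) = k * cumw n s 1 :=
  stmt3_general n k s hk2
end

section
/- Let s ∈ {0,1}^n (n even) with s_1 = 0, s_n = 1, and suppose there is a set I ⊆ {2,...,n-1} closed under i ↦ n+1-i in the sense that s_i ≠ s_{n+1-i} for i ∈ I and s_i = s_{n+1-i} for i ∉ I, and the subsequence of s restricted to positions [n/2] ∩ I is a Catalan-Bertrand string. Then for every i < n/2 with [i] ∩ I ≠ ∅, the prefix weight is strictly smaller than the corresponding suffix weight: wt(s_2...s_i) < wt(s_{n-i+1}...s_{n-1}); and if [i] ∩ I = ∅ then wt(s_2...s_i) = wt(s_{n-i+1}...s_{n-1}). -/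
/-!
Pair position `j ≤ i` of the prefix with its mirror `n + 1 - j` of the suffix. Outside `I` the two
bits agree; inside `I` they are complementary, so the mirror contributes one more `1` exactly when
`s j = 0`. Hence the suffix weight exceeds the prefix weight by the number of `0`s minus the number
of `1`s of `s` on `I ∩ [i]`. This difference vanishes when `I ∩ [i] = ∅`, and otherwise equals the
same count on `I ∩ [j]` for `j = max (I ∩ [i]) ≤ n / 2`, which the Catalan-Bertrand property makes
positive.
-/

/-- `wtI s a b` = Hamming weight of the substring `s_a ... s_b` (1-indexed). -/
def wtI (s : ℕ → ℕ) (a b : ℕ) : ℕ := ∑ i ∈ Finset.Icc a b, s i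

open Finset

lemma wtI_mirror (s : ℕ → ℕ) {n a b : ℕ} (hb : b ≤ n) :
    wtI s (n + 1 - b) (n + 1 - a) = ∑ j ∈ Icc a b, s (n + 1 - j) := by
  refine sum_nbij' (fun k => n + 1 - k) (fun k => n + 1 - k) ?_ ?_ ?_ ?_ ?_ <;>
    intro k hk <;> simp only [mem_Icc] at hk ⊢
  all_goals first | omega | congr 1; omega

lemma sum_comp_eq_sum_add_card_sub_card {α : Type*} [DecidableEq α] (s : α → ℕ) (σ : α → α)
    (hbits : ∀ x, s x ≤ 1) (J I : Finset α)
    (hin : ∀ j ∈ J, j ∈ I → s j ≠ s (σ j)) (hout : ∀ j ∈ J, j ∉ I → s (σ j) = s j) :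
    (∑ j ∈ J, s (σ j) : ℤ) = ∑ j ∈ J, s j + #(J.filter fun j => j ∈ I ∧ s j = 0)
      - #(J.filter fun j => j ∈ I ∧ s j = 1) := by
  push_cast [natCast_card_filter]
  rw [← sum_add_distrib, ← sum_sub_distrib]
  refine sum_congr rfl fun j hj => ?_
  by_cases hjI : j ∈ I
  · have := hin j hj hjI
    have := hbits j
    have := hbits (σ j)
    simp only [hjI, true_and]
    split_ifs <;> omega
  · simp [hjI, hout j hj hjI]

lemma filter_Icc_mem_and_eq {I : Finset ℕ} {a : ℕ} (hI : ∀ x ∈ I, a ≤ x) (i : ℕ)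
    (p : ℕ → Prop) [DecidablePred p] :
    (Icc a i).filter (fun j => j ∈ I ∧ p j) = I.filter (fun j => j ≤ i ∧ p j) := by
  ext x
  simp only [mem_filter, mem_Icc]
  exact ⟨fun ⟨⟨_, hxi⟩, hxI, hp⟩ => ⟨hxI, hxi, hp⟩, fun ⟨hxI, hxi, hp⟩ => ⟨⟨hI x hxI, hxi⟩, hxI, hp⟩⟩

lemma filter_le_and_eq_of_max {I : Finset ℕ} {i j : ℕ} (hji : j ≤ i)
    (hmax : ∀ x ∈ I, x ≤ i → x ≤ j) (p : ℕ → Prop) [DecidablePred p] :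
    I.filter (fun x => x ≤ i ∧ p x) = I.filter (fun x => x ≤ j ∧ p x) :=
  filter_congr fun x hx => ⟨fun h => ⟨hmax x hx h.1, h.2⟩, fun h => ⟨h.1.trans hji, h.2⟩⟩

theorem stmt10_general (n : ℕ) (s : ℕ → ℕ) (hbits : ∀ i, s i ≤ 1)
    (I : Finset ℕ) (hI : I ⊆ Finset.Icc 2 (n - 1))
    (hIin : ∀ i ∈ I, s i ≠ s (n + 1 - i))
    (hIout : ∀ i ∈ Finset.Icc 2 (n - 1), i ∉ I → s i = s (n + 1 - i))
    (hCB : ∀ j ∈ I, j ≤ n / 2 →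
      (I.filter fun i => i ≤ j ∧ s i = 0).card > (I.filter fun i => i ≤ j ∧ s i = 1).card) :
    ∀ i, i < n / 2 →
      ((∃ j ∈ I, j ≤ i) → wtI s 2 i < wtI s (n - i + 1) (n - 1)) ∧
      ((∀ j ∈ I, ¬ j ≤ i) → wtI s 2 i = wtI s (n - i + 1) (n - 1)) := by
  intro i hi
  have hI2 : ∀ x ∈ I, 2 ≤ x := fun x hx => (mem_Icc.mp (hI hx)).1
  have hgap : (wtI s (n - i + 1) (n - 1) : ℤ) = wtI s 2 i
      + #(I.filter fun x => x ≤ i ∧ s x = 0) - #(I.filter fun x => x ≤ i ∧ s x = 1) := by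
    rw [show n - i + 1 = n + 1 - i by omega, show n - 1 = n + 1 - 2 by omega,
      wtI_mirror s (by omega), ← filter_Icc_mem_and_eq hI2, ← filter_Icc_mem_and_eq hI2]
    push_cast
    exact sum_comp_eq_sum_add_card_sub_card s _ hbits _ I (fun j _ => hIin j)
      fun j hj hjI => (hIout j (by simp only [mem_Icc] at hj ⊢; omega) hjI).symm
  constructor
  · rintro ⟨j₀, hj₀, hj₀i⟩
    obtain ⟨j, hj, hjmax⟩ := exists_max_image (I.filter (· ≤ i)) id ⟨j₀, mem_filter.mpr ⟨hj₀, hj₀i⟩⟩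
    obtain ⟨hjI, hji⟩ := mem_filter.mp hj
    have hmax : ∀ x ∈ I, x ≤ i → x ≤ j := fun x hx hxi => hjmax x (mem_filter.mpr ⟨hx, hxi⟩)
    have := hCB j hjI (by omega)
    rw [filter_le_and_eq_of_max hji hmax, filter_le_and_eq_of_max hji hmax] at hgap
    omega
  · intro hnone
    have hempty (p : ℕ → Prop) [DecidablePred p] : I.filter (fun x => x ≤ i ∧ p x) = ∅ :=
      filter_false_of_mem fun x hx h => hnone x hx h.1
    rw [hempty, hempty, card_empty] at hgap
    omega

theorem stmt10 (n : ℕ) (s : ℕ → ℕ) (hbits : ∀ i, s i ≤ 1) (hn : Even n)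
    (h1 : s 1 = 0) (hn1 : s n = 1)
    (I : Finset ℕ) (hI : I ⊆ Finset.Icc 2 (n - 1))
    (hIin : ∀ i ∈ I, s i ≠ s (n + 1 - i))
    (hIout : ∀ i ∈ Finset.Icc 2 (n - 1), i ∉ I → s i = s (n + 1 - i))
    (hCB : ∀ j ∈ I, j ≤ n / 2 →
      (I.filter fun i => i ≤ j ∧ s i = 0).card > (I.filter fun i => i ≤ j ∧ s i = 1).card) :
    ∀ i, i < n / 2 →
      ((∃ j ∈ I, j ≤ i) → wtI s 2 i < wtI s (n - i + 1) (n - 1)) ∧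
      ((∀ j ∈ I, ¬ j ≤ i) → wtI s 2 i = wtI s (n - i + 1) (n - 1)) :=
  stmt10_general n s hbits I hI hIin hIout hCB
end

section
/- A code C ⊆ {0,1}^n can correct the deletion of any t composition multisets C_{i_1},...,C_{i_t} if and only if it can correct the insertion of arbitrarily many spurious compositions into those same t multisets. Formally, for s, v ∈ C, the condition 'there exists I ⊆ [n] with |I| ≤ t such that C_i(s) = C_i(v) for all i ∈ [n] \ I' defines the same confusability relation for the deletion channel and the insertion channel. -/
/-- `compPk n k s`: multiset of compositions (pairs `(k, weight)`) of all length-`k`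
substrings of the binary string `s = s_1 ... s_n` (1-indexed). -/
def compPk (n k : ℕ) (s : ℕ → ℕ) : Multiset (ℕ × ℕ) :=
  (Finset.Icc 1 (n - k + 1)).val.map fun i => (k, ∑ j ∈ Finset.Icc i (i + k - 1), s j)

/-- The composition multiset `C(s) = ∪_{k ∈ [n]} C_k(s)`. -/
def compM (n : ℕ) (s : ℕ → ℕ) : Multiset (ℕ × ℕ) :=
  (Finset.Icc 1 n).val.bind fun k => compPk n k s

/-! Every composition records the length of its substring, so `C(s)` is graded by length and
`C_i(s)` is recovered from `C(s)` by filtering on the first coordinate. Spurious compositions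
of lengths in `I` are invisible outside `I`, and conversely adding the `C_i` with `i ∈ I` of
the other string to each side equalises the two composition multisets. -/

open Finset

section Compositions

variable {n k i : ℕ} {s v : ℕ → ℕ} {I : Finset ℕ}

lemma fst_of_mem_compPk {p : ℕ × ℕ} (hp : p ∈ compPk n k s) : p.1 = k := by
  obtain ⟨_, _, rfl⟩ := Multiset.mem_map.1 hp
  rfl

lemma fst_mem_of_mem_sum_compPk {p : ℕ × ℕ} (hp : p ∈ ∑ k ∈ I, compPk n k s) : p.1 ∈ I := by
  obtain ⟨k, hk, hpk⟩ := Multiset.mem_sum.1 hp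
  rwa [fst_of_mem_compPk hpk]

lemma compM_eq_sum (n : ℕ) (s : ℕ → ℕ) : compM n s = ∑ k ∈ Icc 1 n, compPk n k s := rfl

lemma filter_compM (hi : i ∈ Icc 1 n) :
    (compM n s).filter (fun p => p.1 = i) = compPk n i s := by
  rw [compM, Multiset.filter_bind, Multiset.bind, Multiset.join, ← Finset.sum_eq_multiset_sum,
    Finset.sum_eq_single_of_mem i hi]
  · exact Multiset.filter_eq_self.2 fun p hp => fst_of_mem_compPk hp
  · exact fun k _ hki => Multiset.filter_eq_nil.2 fun p hp => by rwa [fst_of_mem_compPk hp]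

lemma compM_add_sum_eq_of_compPk_eq (hI : I ⊆ Icc 1 n)
    (h : ∀ i ∈ Icc 1 n, i ∉ I → compPk n i s = compPk n i v) :
    compM n s + ∑ k ∈ I, compPk n k v = compM n v + ∑ k ∈ I, compPk n k s := by
  have hrest : ∑ k ∈ Icc 1 n \ I, compPk n k s = ∑ k ∈ Icc 1 n \ I, compPk n k v :=
    sum_congr rfl fun k hk => h k (mem_sdiff.1 hk).1 (mem_sdiff.1 hk).2
  rw [compM_eq_sum, compM_eq_sum, ← sum_sdiff hI, ← sum_sdiff hI (f := fun k => compPk n k v),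
    hrest]
  abel

lemma compPk_eq_of_compM_add_eq {Es Ev : Multiset (ℕ × ℕ)} (hEs : ∀ p ∈ Es, p.1 ∈ I)
    (hEv : ∀ p ∈ Ev, p.1 ∈ I) (h : compM n s + Es = compM n v + Ev) (hi : i ∈ Icc 1 n)
    (hiI : i ∉ I) : compPk n i s = compPk n i v := by
  have hfilter := congrArg (Multiset.filter fun p => p.1 = i) h
  rwa [Multiset.filter_add, Multiset.filter_add, filter_compM hi, filter_compM hi,
    (Multiset.filter_eq_nil (p := fun p => p.1 = i)).2 fun p hp hpi => hiI (hpi ▸ hEs p hp),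
    (Multiset.filter_eq_nil (p := fun p => p.1 = i)).2 fun p hp hpi => hiI (hpi ▸ hEv p hp),
    add_zero, add_zero] at hfilter

end Compositions

theorem stmt11_general (n t : ℕ) (s v : ℕ → ℕ) :
    (∃ I : Finset ℕ, I ⊆ Finset.Icc 1 n ∧ I.card ≤ t ∧
        ∀ i ∈ Finset.Icc 1 n, i ∉ I → compPk n i s = compPk n i v) ↔
    (∃ I : Finset ℕ, I ⊆ Finset.Icc 1 n ∧ I.card ≤ t ∧
        ∃ Es Ev : Multiset (ℕ × ℕ),
          (∀ p ∈ Es, p.1 ∈ I) ∧ (∀ p ∈ Ev, p.1 ∈ I) ∧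
          compM n s + Es = compM n v + Ev) := by
  constructor
  · rintro ⟨I, hI, hcard, h⟩
    exact ⟨I, hI, hcard, _, _, fun _ => fst_mem_of_mem_sum_compPk,
      fun _ => fst_mem_of_mem_sum_compPk, compM_add_sum_eq_of_compPk_eq hI h⟩
  · rintro ⟨I, hI, hcard, Es, Ev, hEs, hEv, h⟩
    exact ⟨I, hI, hcard, fun i hi hiI => compPk_eq_of_compM_add_eq hEs hEv h hi hiI⟩

/-- Equivalence of confusability under deletion of `t` composition multisets and under
insertion of arbitrarily many spurious compositions into `t` multisets. -/
theorem stmt11 (n t : ℕ) (s v : ℕ → ℕ)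
    (hbs : ∀ i, s i ≤ 1) (hbv : ∀ i, v i ≤ 1) :
    (∃ I : Finset ℕ, I ⊆ Finset.Icc 1 n ∧ I.card ≤ t ∧
        ∀ i ∈ Finset.Icc 1 n, i ∉ I → compPk n i s = compPk n i v) ↔
    (∃ I : Finset ℕ, I ⊆ Finset.Icc 1 n ∧ I.card ≤ t ∧
        ∃ Es Ev : Multiset (ℕ × ℕ),
          (∀ p ∈ Es, p.1 ∈ I) ∧ (∀ p ∈ Ev, p.1 ∈ I) ∧
          compM n s + Es = compM n v + Ev) :=
  stmt11_general n t s v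
end

section
/- Let t ≥ 1 and let s ∈ {0,1}^n be a string such that wt(s_1...s_i) + t + 2 ≤ wt(s_{n-i+1}...s_n) for some index i = k. Then for all j with 1 ≤ j ≤ t+1, c(s_j...s_k) ≠ c(s_{n-k+1}...s_{n-j+1}); i.e., wt(s_j...s_k) ≠ wt(s_{n-k+1}...s_{n-j+1}). -/
theorem wtI_mono {a a' b b' : ℕ} (s : ℕ → ℕ) (ha : a' ≤ a) (hb : b ≤ b') :
    wtI s a b ≤ wtI s a' b' :=
  Finset.sum_le_sum_of_subset (Finset.Icc_subset_Icc ha hb)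

theorem wtI_le_add (s : ℕ → ℕ) (a m b : ℕ) :
    wtI s a b ≤ wtI s a m + wtI s (m + 1) b := by
  have hcover : Finset.Icc a b ⊆ Finset.Icc a m ∪ Finset.Icc (m + 1) b := by
    intro x
    simp only [Finset.mem_Icc, Finset.mem_union]
    omega
  have hdisj : Disjoint (Finset.Icc a m) (Finset.Icc (m + 1) b) :=
    Finset.disjoint_left.2 fun x hx hx' => by
      simp only [Finset.mem_Icc] at hx hx'
      omega
  calc wtI s a b ≤ ∑ i ∈ Finset.Icc a m ∪ Finset.Icc (m + 1) b, s i :=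
        Finset.sum_le_sum_of_subset hcover
    _ = wtI s a m + wtI s (m + 1) b := Finset.sum_union hdisj

theorem wtI_le_length {s : ℕ → ℕ} (hbits : ∀ i, s i ≤ 1) (a b : ℕ) :
    wtI s a b ≤ b + 1 - a :=
  calc wtI s a b ≤ (Finset.Icc a b).card • 1 :=
        Finset.sum_le_card_nsmul _ _ _ fun i _ => hbits i
    _ = b + 1 - a := by simp

theorem stmt14_general (n t k : ℕ) (s : ℕ → ℕ) (hbits : ∀ i, s i ≤ 1)
    (h : wtI s 1 k + t + 2 ≤ wtI s (n - k + 1) n) :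
    ∀ j, 1 ≤ j → j ≤ t + 1 → wtI s j k ≠ wtI s (n - k + 1) (n - j + 1) := by
  intro j hj1 hj2
  have hprefix : wtI s j k ≤ wtI s 1 k := wtI_mono s hj1 le_rfl
  have hsuffix :
      wtI s (n - k + 1) n ≤ wtI s (n - k + 1) (n - j + 1) + wtI s (n - j + 2) n :=
    wtI_le_add s _ _ _
  have htail : wtI s (n - j + 2) n ≤ n + 1 - (n - j + 2) := wtI_le_length hbits _ _
  omega

theorem stmt14 (n t k : ℕ) (s : ℕ → ℕ) (hbits : ∀ i, s i ≤ 1)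
    (ht : 1 ≤ t) (hk1 : t + 1 ≤ k) (hk2 : k ≤ n)
    (h : wtI s 1 k + t + 2 ≤ wtI s (n - k + 1) n) :
    ∀ j, 1 ≤ j → j ≤ t + 1 → wtI s j k ≠ wtI s (n - k + 1) (n - j + 1) :=
  stmt14_general n t k s hbits h
end

section
/- Let n be even and t ≥ 2. Suppose σ, σ' ∈ {0,1,2}^{n/2} agree in coordinates 1,...,n/2−t−1 and satisfy Σ_{j=n/2−t}^{n/2} σ_j = Σ_{j=n/2−t}^{n/2} σ'_j. Then the difference D = Σ_{i=n/2−t}^{n/2−1} [ (i·W − Σ_{j=1}^{i-1} j·σ_{i-j}) − (i·W − Σ_{j=1}^{i-1} j·σ'_{i-j}) ] (for W = Σ_j σ_j = Σ_j σ'_j) satisfies D ≤ (t+1)^3/4 if t is even, and D ≤ t(t+1)(t+2)/4 if t is odd. -/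
/-!
Substituting `k = i - j` and swapping the order of summation gives
`2 D = ∑_k a_k (m - k)(m - k - 1)` with `a_k = σ'_k - σ_k` and `m = n / 2`; the terms with
`k < m - t` vanish, so `2 D = ∑_{r ≤ t} b_r r (r - 1)` with `|b_r| ≤ 2` and `|∑ b_r| ≤ 2`
(the sum of the `b_r` is `0`, or `-a_0` when `t ≥ m` and the window reaches the index `0`).
For any threshold `c`, `∑ b_r f_r = ∑ b_r (f_r - c) + c ∑ b_r ≤ 2 ∑ |f_r - c| + 2 |c|`, and the
threshold `c = h (h - 1)` with `h = ⌈t / 2⌉` gives `4 D ≤ t (t + 1)(t + 2) ≤ (t + 1)³`.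
-/

/-- The difference `D = Σ_{i=m−t}^{m−1} [(i·W − Σ_{j=1}^{i−1} j·σ_{i−j}) − (i·W − Σ_{j=1}^{i−1} j·σ'_{i−j})]`
with `W = Σ_{j=1}^{m} σ_j`. -/
def Ddiff (m t : ℕ) (σ σ' : ℕ → ℕ) : ℤ :=
  ∑ i ∈ Finset.Icc (m - t) (m - 1),
    (((i : ℤ) * ∑ j ∈ Finset.Icc 1 m, (σ j : ℤ) -
        ∑ j ∈ Finset.Icc 1 (i - 1), (j : ℤ) * (σ (i - j) : ℤ)) -
     ((i : ℤ) * ∑ j ∈ Finset.Icc 1 m, (σ j : ℤ) -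
        ∑ j ∈ Finset.Icc 1 (i - 1), (j : ℤ) * (σ' (i - j) : ℤ)))

open Finset

theorem sum_mul_le_of_abs_le {ι R : Type*} [CommRing R] [LinearOrder R] [IsStrictOrderedRing R]
    (s : Finset ι) (b f : ι → R) (c M S : R)
    (hb : ∀ i ∈ s, |b i| ≤ M) (hS : |∑ i ∈ s, b i| ≤ S) :
    ∑ i ∈ s, b i * f i ≤ M * ∑ i ∈ s, |f i - c| + S * |c| := by
  have hsplit : ∑ i ∈ s, b i * f i = ∑ i ∈ s, b i * (f i - c) + c * ∑ i ∈ s, b i := by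
    rw [mul_sum, ← sum_add_distrib]
    exact sum_congr rfl fun i _ => by ring
  have hvar : ∑ i ∈ s, b i * (f i - c) ≤ M * ∑ i ∈ s, |f i - c| := by
    rw [mul_sum]
    refine sum_le_sum fun i hi => ?_
    calc b i * (f i - c) ≤ |b i| * |f i - c| := by rw [← abs_mul]; exact le_abs_self _
      _ ≤ M * |f i - c| := mul_le_mul_of_nonneg_right (hb i hi) (abs_nonneg _)
  have hconst : c * ∑ i ∈ s, b i ≤ S * |c| :=
    calc c * ∑ i ∈ s, b i ≤ |c| * |∑ i ∈ s, b i| := by rw [← abs_mul]; exact le_abs_self _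
      _ ≤ S * |c| := by rw [mul_comm]; exact mul_le_mul_of_nonneg_right hS (abs_nonneg _)
  linarith

theorem abs_sum_erase_le_of_sum_eq_zero {ι G : Type*} [DecidableEq ι] [AddCommGroup G]
    [LinearOrder G] [IsOrderedAddMonoid G] {s : Finset ι} {f : ι → G} (hs : ∑ i ∈ s, f i = 0)
    (a : ι) : |∑ i ∈ s.erase a, f i| ≤ |f a| := by
  by_cases ha : a ∈ s
  · rw [← sum_erase_add s f ha, add_eq_zero_iff_eq_neg] at hs
    rw [hs, abs_neg]
  · simp [erase_eq_of_notMem ha, hs]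

theorem monotone_mul_sub_one : Monotone fun r : ℕ => (r : ℤ) * (r - 1) :=
  monotone_nat_of_le_succ fun r => by push_cast; nlinarith

theorem three_mul_sum_range_mul_sub_one (N : ℕ) :
    3 * ∑ r ∈ range N, (r : ℤ) * (r - 1) = N * (N - 1) * (N - 2) := by
  induction N with
  | zero => simp
  | succ N ih => rw [sum_range_succ]; push_cast; linarith

theorem two_mul_sum_Ioo_sub (k m : ℕ) :
    2 * ∑ i ∈ Ioo k m, ((i - k : ℕ) : ℤ) = ((m - k : ℕ) : ℤ) * ((m - k : ℕ) - 1) := by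
  induction m with
  | zero => simp
  | succ m ih =>
    rw [Ioo_add_one_right_eq_Ioc]
    rcases lt_or_ge k m with hkm | hmk
    · rw [← Ioo_insert_right hkm, sum_insert right_notMem_Ioo, show m + 1 - k = m - k + 1 by omega]
      push_cast
      linear_combination ih
    · rw [Ioc_eq_empty (by omega)]
      obtain h | h : m + 1 - k = 0 ∨ m + 1 - k = 1 := by omega
      all_goals simp [h]

theorem three_mul_sum_range_abs_sub {h N : ℕ} (hN : h ≤ N) :
    3 * ∑ r ∈ range N, |(r : ℤ) * (r - 1) - h * (h - 1)| =
      N * (N - 1) * (N - 2) - 2 * (h * (h - 1) * (h - 2)) + 3 * (2 * h - N) * (h * (h - 1)) := by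
  rw [← sum_range_add_sum_Ico _ hN]
  have below : ∀ r ∈ range h, |(r : ℤ) * (r - 1) - h * (h - 1)| = h * (h - 1) - r * (r - 1) :=
    fun r hr => by
      rw [abs_sub_comm, abs_of_nonneg (sub_nonneg.2 (monotone_mul_sub_one (mem_range.1 hr).le))]
  have above : ∀ r ∈ Ico h N, |(r : ℤ) * (r - 1) - h * (h - 1)| = r * (r - 1) - h * (h - 1) :=
    fun r hr => abs_of_nonneg (sub_nonneg.2 (monotone_mul_sub_one (mem_Ico.1 hr).1))
  rw [sum_congr rfl below, sum_congr rfl above, sum_sub_distrib, sum_sub_distrib,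
    sum_Ico_eq_sub _ hN, sum_const, sum_const, card_range, Nat.card_Ico, nsmul_eq_mul,
    nsmul_eq_mul, Nat.cast_sub hN]
  linarith [three_mul_sum_range_mul_sub_one N, three_mul_sum_range_mul_sub_one h]

theorem two_mul_sum_mul_le {ι : Type*} (t : ℕ) (K : Finset ι) (e : ι → ℕ) (he : Set.InjOn e K)
    (het : ∀ k ∈ K, e k ≤ t) (b : ι → ℤ) (hb : ∀ k ∈ K, |b k| ≤ 2) (hsum : |∑ k ∈ K, b k| ≤ 2) :
    2 * ∑ k ∈ K, b k * ((e k : ℤ) * (e k - 1)) ≤ t * (t + 1) * (t + 2) := by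
  classical
  -- `h = ⌈t / 2⌉`; the left side is `12 ∑_{r ≤ t} |r (r - 1) - c| + 12 c` for `c = h (h - 1)`
  obtain ⟨h, hht, hpoly⟩ : ∃ h : ℕ, h ≤ t + 1 ∧
      4 * (((t : ℤ) + 1) * t * (t - 1) - 2 * (h * (h - 1) * (h - 2)) + 3 * (2 * h - (t + 1)) *
        (h * (h - 1))) + 12 * (h * (h - 1)) ≤ 3 * (t * (t + 1) * (t + 2)) := by
    obtain ⟨s, rfl | rfl⟩ := Nat.even_or_odd' t
    · exact ⟨s, by omega, by push_cast; nlinarith⟩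
    · exact ⟨s + 1, by omega, by push_cast; nlinarith⟩
  have hc : (0 : ℤ) ≤ h * (h - 1) := by simpa using monotone_mul_sub_one (Nat.zero_le h)
  have hK : ∑ k ∈ K, |(e k : ℤ) * (e k - 1) - h * (h - 1)| ≤
      ∑ r ∈ range (t + 1), |(r : ℤ) * (r - 1) - h * (h - 1)| := by
    rw [← sum_image (f := fun r : ℕ => |(r : ℤ) * (r - 1) - h * (h - 1)|) he]
    refine sum_le_sum_of_subset_of_nonneg (fun r hr => ?_) fun _ _ _ => abs_nonneg _
    obtain ⟨k, hk, rfl⟩ := mem_image.1 hr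
    exact mem_range.2 (Nat.lt_succ_of_le (het k hk))
  have habs := three_mul_sum_range_abs_sub hht
  have hmain := sum_mul_le_of_abs_le K b (fun k => (e k : ℤ) * (e k - 1)) (h * (h - 1)) 2 2 hb hsum
  rw [abs_of_nonneg hc] at hmain
  push_cast at habs
  linarith

theorem Ddiff_eq_sum_sum (m t : ℕ) (σ σ' : ℕ → ℕ) :
    Ddiff m t σ σ' =
      ∑ i ∈ Icc (m - t) (m - 1), ∑ k ∈ Ico 1 i, ((i - k : ℕ) : ℤ) * ((σ' k : ℤ) - σ k) := by
  refine sum_congr rfl fun i _ => ?_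
  rw [sub_sub_sub_cancel_left, ← sum_sub_distrib]
  refine sum_nbij' (i - ·) (i - ·) ?_ ?_ ?_ ?_ fun j hj => ?_
  rotate_right
  · rw [mul_sub, show i - (i - j) = j by simp only [mem_Icc] at hj; omega]
  all_goals intro j hj; simp only [mem_Icc, mem_Ico] at hj ⊢; omega

theorem two_mul_Ddiff_eq (m t : ℕ) (σ σ' : ℕ → ℕ)
    (hagree : ∀ k, 1 ≤ k → k ≤ m - t - 1 → σ k = σ' k) :
    2 * Ddiff m t σ σ' = ∑ k ∈ (Icc (m - t) m).erase 0,
      ((σ' k : ℤ) - σ k) * (((m - k : ℕ) : ℤ) * ((m - k : ℕ) - 1)) := by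
  have hinner : ∀ i, ∑ k ∈ Ico 1 i, ((i - k : ℕ) : ℤ) * ((σ' k : ℤ) - σ k) =
      ∑ k ∈ Ico 1 i with m - t ≤ k, ((i - k : ℕ) : ℤ) * ((σ' k : ℤ) - σ k) := fun i =>
    (sum_filter_of_ne fun k hk hne => by
      by_contra hlt
      rw [hagree k (mem_Ico.1 hk).1 (by omega), sub_self, mul_zero] at hne
      exact hne rfl).symm
  rw [Ddiff_eq_sum_sum, sum_congr rfl fun i _ => hinner i,
    sum_comm' (t' := (Icc (m - t) m).erase 0) (s' := fun k => Ioo k m) fun i k => by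
      simp only [mem_Icc, mem_filter, mem_Ico, mem_erase, mem_Ioo]; omega,
    mul_sum]
  refine sum_congr rfl fun k _ => ?_
  rw [← sum_mul, ← mul_assoc, two_mul_sum_Ioo_sub, mul_comm]

theorem stmt16_general (n t : ℕ)
    (σ σ' : ℕ → ℕ) (hσ : ∀ i, σ i ≤ 2) (hσ' : ∀ i, σ' i ≤ 2)
    (hagree : ∀ i, 1 ≤ i → i ≤ n / 2 - t - 1 → σ i = σ' i)
    (hsum : ∑ j ∈ Finset.Icc (n / 2 - t) (n / 2), σ j =
            ∑ j ∈ Finset.Icc (n / 2 - t) (n / 2), σ' j) :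
    (Even t → 4 * Ddiff (n / 2) t σ σ' ≤ ((t : ℤ) + 1) ^ 3) ∧
    (¬ Even t → 4 * Ddiff (n / 2) t σ σ' ≤ (t : ℤ) * ((t : ℤ) + 1) * ((t : ℤ) + 2)) := by
  have hdiff : ∀ k, |(σ' k : ℤ) - σ k| ≤ 2 := fun k => by
    have := hσ k; have := hσ' k; exact abs_sub_le_iff.2 ⟨by omega, by omega⟩
  have hbalance : ∑ k ∈ Icc (n / 2 - t) (n / 2), ((σ' k : ℤ) - σ k) = 0 := by
    rw [sum_sub_distrib, sub_eq_zero]; exact_mod_cast hsum.symm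
  have hbound : 4 * Ddiff (n / 2) t σ σ' ≤ t * (t + 1) * (t + 2) := by
    rw [show (4 : ℤ) = 2 * 2 by norm_num, mul_assoc, two_mul_Ddiff_eq _ _ _ _ hagree]
    refine two_mul_sum_mul_le t _ (n / 2 - ·) (fun k hk l hl hkl => ?_)
      (fun k hk => by simp only [mem_erase, mem_Icc] at hk; omega) _ (fun k _ => hdiff k)
      ((abs_sum_erase_le_of_sum_eq_zero hbalance 0).trans (hdiff 0))
    simp only [coe_erase, coe_Icc, Set.mem_sdiff, Set.mem_Icc] at hk hl hkl
    omega
  exact ⟨fun _ => hbound.trans (by nlinarith), fun _ => hbound⟩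

theorem stmt16 (n t : ℕ) (hn : Even n) (ht : 2 ≤ t)
    (σ σ' : ℕ → ℕ) (hσ : ∀ i, σ i ≤ 2) (hσ' : ∀ i, σ' i ≤ 2)
    (hagree : ∀ i, 1 ≤ i → i ≤ n / 2 - t - 1 → σ i = σ' i)
    (hsum : ∑ j ∈ Finset.Icc (n / 2 - t) (n / 2), σ j =
            ∑ j ∈ Finset.Icc (n / 2 - t) (n / 2), σ' j) :
    (Even t → 4 * Ddiff (n / 2) t σ σ' ≤ ((t : ℤ) + 1) ^ 3) ∧
    (¬ Even t → 4 * Ddiff (n / 2) t σ σ' ≤ (t : ℤ) * ((t : ℤ) + 1) * ((t : ℤ) + 2)) :=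
  stmt16_general n t σ σ' hσ hσ' hagree hsum
end

section
/- Let t ≥ 2 and suppose σ, σ' ∈ {0,1,2}^m agree outside an index window I = {k−t−1,...,k} (with t+2 ≤ k ≤ m) and satisfy Σ_{j∈I} σ_j = Σ_{j∈I} σ'_j. Then Σ_{i=k-t}^{k-1} Σ_{j=1}^{i-1} j·(σ'_{i-j} − σ_{i-j}) = (t(t+1)/2)(σ'_{k-t-1} − σ_{k-t-1}) + ((t-1)t/2)(σ'_{k-t} − σ_{k-t}) + ... + 1·(σ'_{k-2} − σ_{k-2}), and this quantity is at most t(t+2)^2/4 if t is even and at most t(t+1)(t+3)/4 if t is odd. -/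
/-!
Substituting `p = i - j` and exchanging the order of summation turns `Q` into
`∑ T_r e_r` with triangular weights `T_r = r(r+1)/2` and `e_r = σ'_{k-1-r} - σ_{k-1-r}`;
the positions below the window drop out because `σ` and `σ'` agree there.
The bound is a linear program: `|e_r| ≤ 2` and, since the window sums agree,
`∑ e_r ≤ 4`. Splitting off the threshold `λ = T_{⌊t/2⌋}` gives
`∑ T_r e_r ≤ 4λ + 2 ∑ |T_r - λ|`, and evaluating the right-hand side with
`∑_{r ≤ n} r(r+1) = n(n+1)(n+2)/3` yields the two bounds, with equality.
-/

/-- `Q = Σ_{i=k−t}^{k−1} Σ_{j=1}^{i−1} j·(σ'_{i−j} − σ_{i−j})`. -/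
def Qdiff (k t : ℕ) (σ σ' : ℕ → ℕ) : ℤ :=
  ∑ i ∈ Finset.Icc (k - t) (k - 1), ∑ j ∈ Finset.Icc 1 (i - 1),
    (j : ℤ) * ((σ' (i - j) : ℤ) - (σ (i - j) : ℤ))

open Finset

theorem sum_Icc_sum_Icc_mul_sub_eq {R : Type*} [Semiring R] (K t : ℕ) (hK : 1 ≤ K) (f : ℕ → R)
    (hf : ∀ p, 1 ≤ p → p < K → f p = 0) :
    ∑ i ∈ Icc (K + 1) (K + t), ∑ j ∈ Icc 1 (i - 1), (j : R) * f (i - j) =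
      ∑ r ∈ Icc 1 t, (∑ q ∈ Icc 1 r, (q : R)) * f (K + t - r) := by
  have hdrop : ∀ i ∈ Icc (K + 1) (K + t),
      ∑ j ∈ Icc 1 (i - 1), (j : R) * f (i - j) = ∑ j ∈ Icc 1 (i - K), (j : R) * f (i - j) := by
    intro i hi
    refine (sum_subset (Icc_subset_Icc_right (by omega)) fun j hj hjK => ?_).symm
    simp only [mem_Icc] at hi hj hjK
    rw [hf _ (by omega) (by omega), mul_zero]
  simp only [sum_congr rfl hdrop, sum_mul, sum_sigma']
  -- `(i, j) ↦ (r, q) = (K + t + j - i, j)` is an involution matching the two index sets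
  refine sum_nbij' (fun x => ⟨K + t + x.2 - x.1, x.2⟩) (fun x => ⟨K + t + x.2 - x.1, x.2⟩)
    ?_ ?_ ?_ ?_ ?_
  all_goals
    rintro ⟨a, b⟩ h
    simp only [mem_sigma, mem_Icc, Sigma.mk.injEq, heq_eq_eq, and_true] at h ⊢
  · omega
  · omega
  · omega
  · omega
  · congr 2; omega

theorem sum_Icc_one_id (r : ℕ) : ∑ q ∈ Icc 1 r, (q : ℤ) = r * (r + 1) / 2 := by
  refine (Int.ediv_eq_of_eq_mul_right two_ne_zero ?_).symm
  induction r with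
  | zero => simp
  | succ r ih => rw [sum_Icc_succ_top (by omega), mul_add 2, ← ih]; push_cast; ring

theorem Qdiff_eq_sum_triangle_mul (k t : ℕ) (σ σ' : ℕ → ℕ) (hk : t + 2 ≤ k)
    (hagree : ∀ p, 1 ≤ p → p < k - t - 1 → σ p = σ' p) :
    Qdiff k t σ σ' =
      ∑ r ∈ Icc 1 t, ((r : ℤ) * (r + 1) / 2) * ((σ' (k - 1 - r) : ℤ) - σ (k - 1 - r)) := by
  obtain ⟨K, hK, rfl⟩ : ∃ K, 1 ≤ K ∧ k = K + t + 1 := ⟨k - t - 1, by omega, by omega⟩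
  have hzero : ∀ p, 1 ≤ p → p < K → (σ' p : ℤ) - σ p = 0 := fun p hp hpK => by
    rw [hagree p hp (by omega), sub_self]
  rw [Qdiff, show K + t + 1 - t = K + 1 by omega, Nat.add_sub_cancel,
    sum_Icc_sum_Icc_mul_sub_eq K t hK _ hzero]
  exact sum_congr rfl fun r _ => by rw [sum_Icc_one_id]

theorem sum_Icc_add_eq_sum_Icc_sub_add {M : Type*} [AddCommMonoid M] (f : ℕ → M) {n t : ℕ}
    (ht : t ≤ n) :
    ∑ p ∈ Icc (n - t) (n + 1), f p = ∑ r ∈ Icc 1 t, f (n - r) + f n + f (n + 1) := by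
  rw [sum_Icc_succ_top (by omega), ← Ico_add_one_right_eq_Icc, sum_Ico_succ_top (by omega),
    ← Ico_add_one_right_eq_Icc, sum_Ico_reflect _ _ (by omega), Nat.add_sub_cancel,
    show n + 1 - (t + 1) = n - t by omega]

theorem sum_mul_le_of_monotone {R : Type*} [CommRing R] [PartialOrder R] [IsOrderedRing R]
    (w e : ℕ → R) (hw : Monotone w) (t s : ℕ) (hst : s ≤ t) (hws : 0 ≤ w s) (c E : R)
    (he : ∀ r, -c ≤ e r ∧ e r ≤ c) (hE : ∑ r ∈ Ioc 0 t, e r ≤ E) :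
    ∑ r ∈ Ioc 0 t, w r * e r ≤
      w s * E + c * (∑ r ∈ Ioc 0 s, (w s - w r) + ∑ r ∈ Ioc s t, (w r - w s)) := by
  have hsplit : ∑ r ∈ Ioc 0 t, w r * e r =
      w s * ∑ r ∈ Ioc 0 t, e r + ∑ r ∈ Ioc 0 t, (w r - w s) * e r := by
    rw [mul_sum, ← sum_add_distrib]
    exact sum_congr rfl fun r _ => by ring
  have hlow : ∀ r ∈ Ioc 0 s, (w r - w s) * e r ≤ c * (w s - w r) := fun r hr => by
    have hneg : w r - w s ≤ 0 := sub_nonpos.2 (hw (mem_Ioc.1 hr).2)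
    exact (mul_le_mul_of_nonpos_left (he r).1 hneg).trans_eq (by ring)
  have hhigh : ∀ r ∈ Ioc s t, (w r - w s) * e r ≤ c * (w r - w s) := fun r hr => by
    have hpos : 0 ≤ w r - w s := sub_nonneg.2 (hw (mem_Ioc.1 hr).1.le)
    exact (mul_le_mul_of_nonneg_left (he r).2 hpos).trans_eq (mul_comm _ _)
  calc ∑ r ∈ Ioc 0 t, w r * e r
      = w s * ∑ r ∈ Ioc 0 t, e r +
          (∑ r ∈ Ioc 0 s, (w r - w s) * e r + ∑ r ∈ Ioc s t, (w r - w s) * e r) := by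
        rw [hsplit, sum_Ioc_consecutive _ s.zero_le hst]
    _ ≤ w s * E + (∑ r ∈ Ioc 0 s, c * (w s - w r) + ∑ r ∈ Ioc s t, c * (w r - w s)) :=
        add_le_add (mul_le_mul_of_nonneg_left hE hws) (add_le_add (sum_le_sum hlow)
          (sum_le_sum hhigh))
    _ = _ := by rw [mul_add, mul_sum, mul_sum]

theorem three_mul_sum_Ioc_mul_succ (n : ℕ) :
    3 * ∑ r ∈ Ioc 0 n, (r : ℤ) * (r + 1) = n * (n + 1) * (n + 2) := by
  induction n with
  | zero => simp
  | succ n ih => rw [sum_Ioc_succ_top n.zero_le, mul_add, ih]; push_cast; ring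

theorem three_mul_deviation_sum_mul_succ {s t : ℕ} (hst : s ≤ t) :
    3 * (∑ r ∈ Ioc 0 s, ((s : ℤ) * (s + 1) - r * (r + 1)) +
        ∑ r ∈ Ioc s t, ((r : ℤ) * (r + 1) - s * (s + 1))) =
      t * (t + 1) * (t + 2) - 2 * (s * (s + 1) * (s + 2)) + 3 * (2 * s - t) * (s * (s + 1)) := by
  have hPs := three_mul_sum_Ioc_mul_succ s
  have hPt := three_mul_sum_Ioc_mul_succ t
  rw [← sum_Ioc_consecutive _ s.zero_le hst] at hPt
  simp only [sum_sub_distrib, sum_const, Nat.card_Ioc, nsmul_eq_mul, Nat.cast_sub hst]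
  linear_combination hPt - 2 * hPs

theorem two_mul_triangle (r : ℕ) : 2 * ((r : ℤ) * (r + 1) / 2) = r * (r + 1) :=
  Int.mul_ediv_cancel' (Int.even_mul_succ_self r).two_dvd

theorem four_mul_sum_triangle_mul_le (t : ℕ) (e : ℕ → ℤ) (he : ∀ r, -2 ≤ e r ∧ e r ≤ 2)
    (hE : ∑ r ∈ Icc 1 t, e r ≤ 4) :
    (Even t → 4 * ∑ r ∈ Icc 1 t, ((r : ℤ) * (r + 1) / 2) * e r ≤ t * (t + 2) ^ 2) ∧
    (¬ Even t → 4 * ∑ r ∈ Icc 1 t, ((r : ℤ) * (r + 1) / 2) * e r ≤ t * (t + 1) * (t + 3)) := by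
  have hW : Monotone fun r : ℕ => (r : ℤ) * (r + 1) := fun a b hab => by
    have : (a : ℤ) ≤ b := by exact_mod_cast hab
    dsimp only; gcongr
  rw [show Icc 1 t = Ioc 0 t from Icc_add_one_left_eq_Ioc 0 t] at hE ⊢
  have h4 : 4 * ∑ r ∈ Ioc 0 t, ((r : ℤ) * (r + 1) / 2) * e r =
      2 * ∑ r ∈ Ioc 0 t, (r : ℤ) * (r + 1) * e r := by
    simp only [mul_sum]
    exact sum_congr rfl fun r _ => by linear_combination 2 * e r * two_mul_triangle r
  have hLP := sum_mul_le_of_monotone _ e hW t (t / 2) (Nat.div_le_self t 2) (by positivity) 2 4 he hE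
  have hdev := three_mul_deviation_sum_mul_succ (Nat.div_le_self t 2)
  rw [h4]
  constructor
  · rintro ⟨s, rfl⟩
    rw [show (s + s) / 2 = s by omega] at hLP hdev
    push_cast at hLP hdev ⊢
    linarith
  · intro hodd
    obtain ⟨s, rfl⟩ := Nat.odd_iff.2 (Nat.not_even_iff.1 hodd)
    rw [show (2 * s + 1) / 2 = s by omega] at hLP hdev
    push_cast at hLP hdev ⊢
    linarith

theorem stmt17_general (m t k : ℕ) (hk1 : t + 2 ≤ k) (hk2 : k ≤ m)
    (σ σ' : ℕ → ℕ) (hσ : ∀ i, σ i ≤ 2) (hσ' : ∀ i, σ' i ≤ 2)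
    (hagree : ∀ i, 1 ≤ i → i ≤ m → i ∉ Finset.Icc (k - t - 1) k → σ i = σ' i)
    (hsum : ∑ j ∈ Finset.Icc (k - t - 1) k, σ j = ∑ j ∈ Finset.Icc (k - t - 1) k, σ' j) :
    (Qdiff k t σ σ' =
      ∑ r ∈ Finset.Icc 1 t,
        ((r : ℤ) * ((r : ℤ) + 1) / 2) * ((σ' (k - 1 - r) : ℤ) - (σ (k - 1 - r) : ℤ))) ∧
    (Even t → 4 * Qdiff k t σ σ' ≤ (t : ℤ) * ((t : ℤ) + 2) ^ 2) ∧
    (¬ Even t → 4 * Qdiff k t σ σ' ≤ (t : ℤ) * ((t : ℤ) + 1) * ((t : ℤ) + 3)) := by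
  rw [Qdiff_eq_sum_triangle_mul k t σ σ' hk1 fun p hp hpk =>
    hagree p hp (by omega) (by rw [mem_Icc]; omega)]
  refine ⟨rfl, ?_⟩
  obtain ⟨n, rfl⟩ : ∃ n, k = n + 1 := ⟨k - 1, by omega⟩
  have hwindow := sum_Icc_add_eq_sum_Icc_sub_add (fun p => (σ' p : ℤ) - σ p) (by omega : t ≤ n)
  rw [show n + 1 - t - 1 = n - t by omega] at hsum
  rw [sum_sub_distrib, ← Nat.cast_sum, ← Nat.cast_sum, hsum, sub_self] at hwindow
  simp only [Nat.add_sub_cancel]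
  refine four_mul_sum_triangle_mul_le t _ (fun r => ?_) ?_
  · have := hσ (n - r); have := hσ' (n - r); omega
  · have := hσ n; have := hσ (n + 1); omega

theorem stmt17 (m t k : ℕ) (ht : 2 ≤ t) (hk1 : t + 2 ≤ k) (hk2 : k ≤ m)
    (σ σ' : ℕ → ℕ) (hσ : ∀ i, σ i ≤ 2) (hσ' : ∀ i, σ' i ≤ 2)
    (hagree : ∀ i, 1 ≤ i → i ≤ m → i ∉ Finset.Icc (k - t - 1) k → σ i = σ' i)
    (hsum : ∑ j ∈ Finset.Icc (k - t - 1) k, σ j = ∑ j ∈ Finset.Icc (k - t - 1) k, σ' j) :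
    (Qdiff k t σ σ' =
      ∑ r ∈ Finset.Icc 1 t,
        ((r : ℤ) * ((r : ℤ) + 1) / 2) * ((σ' (k - 1 - r) : ℤ) - (σ (k - 1 - r) : ℤ))) ∧
    (Even t → 4 * Qdiff k t σ σ' ≤ (t : ℤ) * ((t : ℤ) + 2) ^ 2) ∧
    (¬ Even t → 4 * Qdiff k t σ σ' ≤ (t : ℤ) * ((t : ℤ) + 1) * ((t : ℤ) + 3)) :=
  stmt17_general m t k hk1 hk2 σ σ' hσ hσ' hagree hsum
end

section
/- If a single composition in the multiset C_i(s) of a binary string s ∈ {0,1}^n is replaced by a composition of strictly smaller weight (a skewed substitution) yielding corrupted cumulative weights w'_k, and C_{n-i+1}(s) is unaffected with i ≠ n−i+1, then w'_i < w'_{n-i+1}, and for every k ∉ {i, n−i+1} with k ≠ n−k+1 one has w'_k = w'_{n-k+1}; hence the corrupted multiset index i is identifiable as the unique k with w'_k < w'_{n-k+1}. -/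
open Finset

theorem cumw_symm (n : ℕ) (s : ℕ → ℕ) {k : ℕ} (hk1 : 1 ≤ k) (hk2 : k ≤ n) :
    cumw n s k = cumw n s (n - k + 1) := by
  unfold cumw
  rw [sum_sigma', sum_sigma']
  refine sum_bij' (fun p _ => ⟨p.2 - p.1 + 1, p.2⟩) (fun p _ => ⟨p.2 - p.1 + 1, p.2⟩)
    ?_ ?_ ?_ ?_ fun _ _ => rfl <;>
  · rintro ⟨a, b⟩ h
    simp only [mem_sigma, mem_Icc, Sigma.mk.injEq, heq_eq_eq, and_true] at h ⊢
    omega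

section Corruption

variable {n i : ℕ} {f w' : ℕ → ℕ}
  (hf : ∀ k, 1 ≤ k → k ≤ n → f k = f (n - k + 1))
  (hother : ∀ k, k ≠ i → w' k = f k)
  (hdec : w' i < f i)
include hf hother hdec

theorem corrupted_lt_reflect (hi1 : 1 ≤ i) (hi2 : i ≤ n) (hne : i ≠ n - i + 1) :
    w' i < w' (n - i + 1) := by
  rwa [hother _ hne.symm, ← hf i hi1 hi2]

omit hdec in
theorem corrupted_eq_reflect {k : ℕ} (hk1 : 1 ≤ k) (hk2 : k ≤ n) (hki : k ≠ i)
    (hki' : k ≠ n - i + 1) : w' k = w' (n - k + 1) := by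
  rw [hother k hki, hother (n - k + 1) (by omega), hf k hk1 hk2]

theorem eq_of_corrupted_lt_reflect (hi1 : 1 ≤ i) (hi2 : i ≤ n) (hne : i ≠ n - i + 1) {k : ℕ}
    (hk1 : 1 ≤ k) (hk2 : k ≤ n) (hlt : w' k < w' (n - k + 1)) : k = i := by
  by_contra hki
  by_cases hki' : k = n - i + 1
  · subst hki'
    rw [show n - (n - i + 1) + 1 = i by omega] at hlt
    exact lt_asymm hlt (corrupted_lt_reflect hf hother hdec hi1 hi2 hne)
  · exact hlt.ne (corrupted_eq_reflect hf hother hk1 hk2 hki hki')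

end Corruption

theorem stmt19_general (n i : ℕ) (s : ℕ → ℕ)
    (hi1 : 1 ≤ i) (hi2 : i ≤ n) (hne : i ≠ n - i + 1)
    (w' : ℕ → ℕ)
    (hother : ∀ k, k ≠ i → w' k = cumw n s k)
    (hdec : w' i < cumw n s i) :
    w' i < w' (n - i + 1) ∧
    (∀ k ∈ Finset.Icc 1 n, k ≠ i → k ≠ n - i + 1 → k ≠ n - k + 1 → w' k = w' (n - k + 1)) ∧
    (∀ k ∈ Finset.Icc 1 n, w' k < w' (n - k + 1) → k = i) := by
  have hf : ∀ k, 1 ≤ k → k ≤ n → cumw n s k = cumw n s (n - k + 1) :=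
    fun _ => cumw_symm n s
  refine ⟨corrupted_lt_reflect hf hother hdec hi1 hi2 hne, ?_, ?_⟩
  · intro k hk hki hki' _
    rw [mem_Icc] at hk
    exact corrupted_eq_reflect hf hother hk.1 hk.2 hki hki'
  · intro k hk hlt
    rw [mem_Icc] at hk
    exact eq_of_corrupted_lt_reflect hf hother hdec hi1 hi2 hne hk.1 hk.2 hlt

theorem stmt19 (n i : ℕ) (s : ℕ → ℕ) (hbits : ∀ j, s j ≤ 1)
    (hi1 : 1 ≤ i) (hi2 : i ≤ n) (hne : i ≠ n - i + 1)
    (w' : ℕ → ℕ)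
    (hother : ∀ k, k ≠ i → w' k = cumw n s k)
    (hdec : w' i < cumw n s i) :
    w' i < w' (n - i + 1) ∧
    (∀ k ∈ Finset.Icc 1 n, k ≠ i → k ≠ n - i + 1 → k ≠ n - k + 1 → w' k = w' (n - k + 1)) ∧
    (∀ k ∈ Finset.Icc 1 n, w' k < w' (n - k + 1) → k = i) :=
  stmt19_general n i s hi1 hi2 hne w' hother hdec
end
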